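/- arXiv:2202.12289 — 3 statements merged into one kernel-verified Lean document; each statement's English description precedes it below -/
import Mathlib

section
/- Let B be the symmetric 4×4 integer matrix B = [[2,1,-4,-2],[1,2,-2,-4],[-4,-2,-2,-1],[-2,-4,-1,-2]] (which equals A + Aᵀ for the Seifert matrix A of the genus-2 surface of the knot J of Remark 1.6). Then the associated integral quadratic form is anisotropic: for every vector v ∈ ℤ⁴, if vᵀ B v = 0 then v = 0. -/
/-!
Infinite descent at the prime 3: a finite check modulo 9 shows that vᵀBv = 0 forces every
coordinate of v to be divisible by 3, and since the form is homogeneous of degree 2, v / 3 is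
again isotropic. Hence every coordinate of v is divisible by all powers of 3, so v = 0.
-/

open Matrix

def matrixJ : Matrix (Fin 4) (Fin 4) ℤ :=
  !![2, 1, -4, -2;
     1, 2, -2, -4;
     -4, -2, -2, -1;
     -2, -4, -1, -2]

def quadFormJ {R : Type*} [CommRing R] (a b c d : R) : R :=
  2*a^2 + 2*b^2 - 2*c^2 - 2*d^2 + 2*a*b - 8*a*c - 4*a*d - 4*b*c - 8*b*d - 2*c*d

theorem dotProduct_matrixJ_mulVec (v : Fin 4 → ℤ) :
    v ⬝ᵥ (matrixJ *ᵥ v) = quadFormJ (v 0) (v 1) (v 2) (v 3) := by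
  simp [matrixJ, quadFormJ, dotProduct, mulVec, Fin.sum_univ_four]
  ring

-- The form has nontrivial zeros modulo 3, e.g. (1, 1, 0, 0), so the check must be made modulo 9.
theorem quadFormJ_zmod_nine {a b c d : ZMod 9} (h : quadFormJ a b c d = 0) :
    3 * a = 0 ∧ 3 * b = 0 ∧ 3 * c = 0 ∧ 3 * d = 0 := by
  revert a b c d
  unfold quadFormJ
  decide

theorem Int.three_dvd_of_three_mul_cast_zmod_nine {x : ℤ} (hx : 3 * (x : ZMod 9) = 0) :
    3 ∣ x := by
  have h9 : (9 : ℤ) ∣ 3 * x :=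
    (ZMod.intCast_zmod_eq_zero_iff_dvd (3 * x) 9).mp (by push_cast; exact hx)
  omega

theorem three_dvd_of_dotProduct_matrixJ_mulVec_eq_zero {v : Fin 4 → ℤ}
    (h : v ⬝ᵥ (matrixJ *ᵥ v) = 0) (i : Fin 4) : 3 ∣ v i := by
  have h9 : quadFormJ (v 0 : ZMod 9) (v 1) (v 2) (v 3) = 0 := by
    rw [dotProduct_matrixJ_mulVec] at h
    simpa [quadFormJ] using congrArg (Int.cast : ℤ → ZMod 9) h
  obtain ⟨h0, h1, h2, h3⟩ := quadFormJ_zmod_nine h9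
  fin_cases i <;> apply Int.three_dvd_of_three_mul_cast_zmod_nine <;> assumption

theorem Int.eq_zero_of_forall_pow_dvd {p x : ℤ} (hp : 1 < p.natAbs) (h : ∀ k : ℕ, p ^ k ∣ x) :
    x = 0 :=
  Int.eq_zero_of_dvd_of_natAbs_lt_natAbs (h x.natAbs) <| by
    rw [Int.natAbs_pow]
    exact Nat.lt_pow_self hp

theorem eq_zero_of_descent {ι : Type*} {S : Set (ι → ℤ)} {p : ℤ} (hp : 1 < p.natAbs)
    (hS : ∀ v ∈ S, ∃ w ∈ S, v = p • w) : ∀ v ∈ S, v = 0 := by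
  have hdvd : ∀ k : ℕ, ∀ v ∈ S, ∀ i, p ^ k ∣ v i := by
    intro k
    induction k with
    | zero => simp
    | succ k ih =>
      intro v hv i
      obtain ⟨w, hw, rfl⟩ := hS v hv
      rw [pow_succ']
      exact mul_dvd_mul_left p (ih w hw i)
  intro v hv
  funext i
  exact Int.eq_zero_of_forall_pow_dvd hp fun k => hdvd k v hv i

theorem stmt_0 :
    let B : Matrix (Fin 4) (Fin 4) ℤ :=
      !![2, 1, -4, -2;
         1, 2, -2, -4;
         -4, -2, -2, -1;
         -2, -4, -1, -2]
    ∀ v : Fin 4 → ℤ, v ⬝ᵥ (B *ᵥ v) = 0 → v = 0 := by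
  intro B v hv
  refine eq_zero_of_descent (S := {v | v ⬝ᵥ (matrixJ *ᵥ v) = 0}) (p := 3) (by decide) ?_ v hv
  intro v hv
  choose w hw using three_dvd_of_dotProduct_matrixJ_mulVec_eq_zero hv
  obtain rfl : v = (3 : ℤ) • w := funext hw
  refine ⟨w, ?_, rfl⟩
  simp only [Set.mem_ofPred_eq, mulVec_smul, dotProduct_smul, smul_dotProduct, smul_eq_mul]
    at hv ⊢
  omega
end

section
/- Let B be the symmetric 4×4 integer matrix B = [[2,1,-4,-2],[1,2,-2,-4],[-4,-2,-2,-1],[-2,-4,-1,-2]] (which equals A + Aᵀ for the Seifert matrix A of the genus-2 surface of the knot J of Remark 1.6). Then the quadratic form with Gram matrix B is anisotropic over the field ℚ₃ of 3-adic numbers: for every vector v ∈ (ℚ₃)⁴, if vᵀ B v = 0 then v = 0. -/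
/-!
Completing squares, `2 vᵀ B v = N(x, y) + 3 N(z, w)` with `N(s, t) = s² - 5 t²`, where for
`v = (a, b, c, d)` one takes `x = 2a + b - 4c - 2d`, `y = 2c + d`, `z = b - 2d`, `w = d`.
Since `5` is not a square mod `3`, `N` is anisotropic mod `3`, so `‖N(s, t)‖ = max ‖s‖ ‖t‖ ^ 2`
over `ℚ₃`: its nonzero values are even powers of `3`. As `‖3‖ = 3⁻¹` is an odd power,
`N(x, y) = -3 N(z, w)` forces both sides to vanish, hence `x = y = z = w = 0`.
-/

open Matrix

theorem eq_zero_and_eq_zero_of_sq_sub_mul_sq_eq_zero {K : Type*} [Field K] {d : K}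
    (hd : ¬IsSquare d) {a b : K} (h : a ^ 2 - d * b ^ 2 = 0) : a = 0 ∧ b = 0 := by
  by_cases hb : b = 0
  · subst hb
    exact ⟨pow_eq_zero_iff two_ne_zero |>.mp (by simpa using h), rfl⟩
  · refine absurd ⟨a / b, ?_⟩ hd
    field_simp
    linear_combination -h

theorem max_norm_eq_zero_iff {E : Type*} [NormedAddCommGroup E] {x y : E} :
    max ‖x‖ ‖y‖ = 0 ↔ x = 0 ∧ y = 0 := by
  rw [← norm_le_zero_iff (a := x), ← norm_le_zero_iff (a := y), ← max_le_iff,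
    (le_max_of_le_left (norm_nonneg x)).ge_iff_eq']

namespace IsLocalRing

theorem isUnit_sq_sub_mul_sq {R : Type*} [CommRing R] [IsLocalRing R] {d : R}
    (hd : ¬IsSquare (residue R d)) {x y : R} (hxy : IsUnit x ∨ IsUnit y) :
    IsUnit (x ^ 2 - d * y ^ 2) := by
  have residue_eq_zero_iff' (z : R) : residue R z = 0 ↔ ¬IsUnit z := by
    rw [residue_eq_zero_iff, mem_maximalIdeal, mem_nonunits_iff]
  by_contra h
  have hres : residue R x ^ 2 - residue R d * residue R y ^ 2 = 0 := by
    simpa using (residue_eq_zero_iff' _).2 h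
  obtain ⟨hx, hy⟩ := eq_zero_and_eq_zero_of_sq_sub_mul_sq_eq_zero hd hres
  rcases hxy with hxy | hxy
  exacts [(residue_eq_zero_iff' x).1 hx hxy, (residue_eq_zero_iff' y).1 hy hxy]

end IsLocalRing

namespace Padic

variable {p : ℕ} [Fact p.Prime] {d : ℤ_[p]}

theorem norm_sq_sub_mul_sq_of_max_norm_eq_one (hd : ¬IsSquare (IsLocalRing.residue ℤ_[p] d))
    {x y : ℚ_[p]} (hxy : max ‖x‖ ‖y‖ = 1) : ‖x ^ 2 - d * y ^ 2‖ = 1 := by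
  obtain ⟨x, rfl⟩ : ∃ x' : ℤ_[p], (x' : ℚ_[p]) = x := ⟨⟨x, (le_max_left _ _).trans_eq hxy⟩, rfl⟩
  obtain ⟨y, rfl⟩ : ∃ y' : ℤ_[p], (y' : ℚ_[p]) = y := ⟨⟨y, (le_max_right _ _).trans_eq hxy⟩, rfl⟩
  have hunit : IsUnit x ∨ IsUnit y := by
    simp only [PadicInt.isUnit_iff, PadicInt.norm_def]
    exact (max_choice _ _).imp (·.symm.trans hxy) (·.symm.trans hxy)
  have := PadicInt.isUnit_iff.1 (IsLocalRing.isUnit_sq_sub_mul_sq hd hunit)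
  exact_mod_cast this

theorem norm_sq_sub_mul_sq (hd : ¬IsSquare (IsLocalRing.residue ℤ_[p] d)) (x y : ℚ_[p]) :
    ‖x ^ 2 - d * y ^ 2‖ = max ‖x‖ ‖y‖ ^ 2 := by
  obtain ⟨c, hcx⟩ : ∃ c : ℚ_[p], ‖c‖ = max ‖x‖ ‖y‖ :=
    (max_choice _ _).elim (⟨x, ·.symm⟩) (⟨y, ·.symm⟩)
  rcases eq_or_ne c 0 with rfl | hc0
  · rw [norm_zero, eq_comm, max_norm_eq_zero_iff] at hcx
    simp [hcx.1, hcx.2]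
  have hscaled : max ‖x / c‖ ‖y / c‖ = 1 := by
    rw [norm_div, norm_div, max_div_div_right (norm_nonneg c), ← hcx,
      div_self (norm_ne_zero_iff.2 hc0)]
  calc ‖x ^ 2 - d * y ^ 2‖ = ‖c‖ ^ 2 * ‖(x / c) ^ 2 - d * (y / c) ^ 2‖ := by
        rw [← norm_pow, ← norm_mul]; congr 1; field_simp
    _ = max ‖x‖ ‖y‖ ^ 2 := by rw [norm_sq_sub_mul_sq_of_max_norm_eq_one hd hscaled, mul_one, hcx]

theorem exists_max_norm_eq_zpow {x y : ℚ_[p]} (h : max ‖x‖ ‖y‖ ≠ 0) :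
    ∃ k : ℤ, max ‖x‖ ‖y‖ = (p : ℝ) ^ k := by
  obtain ⟨c, hc⟩ : ∃ c : ℚ_[p], max ‖x‖ ‖y‖ = ‖c‖ := (max_choice _ _).elim (⟨x, ·⟩) (⟨y, ·⟩)
  rw [hc] at h ⊢
  exact ⟨_, norm_eq_zpow_neg_valuation (norm_ne_zero_iff.1 h)⟩

theorem eq_zero_of_sq_sub_mul_sq_add_p_mul_eq_zero
    (hd : ¬IsSquare (IsLocalRing.residue ℤ_[p] d)) {x y z w : ℚ_[p]}
    (h : x ^ 2 - d * y ^ 2 + p * (z ^ 2 - d * w ^ 2) = 0) :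
    x = 0 ∧ y = 0 ∧ z = 0 ∧ w = 0 := by
  have hp : (1 : ℝ) < p := mod_cast (Fact.out : p.Prime).one_lt
  have hnorm : max ‖x‖ ‖y‖ ^ 2 = (p : ℝ) ^ (-1 : ℤ) * max ‖z‖ ‖w‖ ^ 2 := by
    rw [← norm_sq_sub_mul_sq hd, ← norm_sq_sub_mul_sq hd, _root_.zpow_neg_one, ← norm_p,
      ← norm_mul, eq_neg_of_add_eq_zero_left h, norm_neg]
  have hzw : max ‖z‖ ‖w‖ = 0 := by
    -- otherwise both sides are nonzero and the exponents of `p` would differ in parity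
    by_contra hzw
    have hxy : max ‖x‖ ‖y‖ ≠ 0 := fun h0 ↦ by
      rw [h0] at hnorm; simp_all
    obtain ⟨k, hk⟩ := exists_max_norm_eq_zpow hxy
    obtain ⟨l, hl⟩ := exists_max_norm_eq_zpow hzw
    rw [hk, hl, ← zpow_natCast, ← zpow_natCast, ← _root_.zpow_mul, ← _root_.zpow_mul,
      ← zpow_add₀ (by positivity)] at hnorm
    have := zpow_right_injective₀ (by positivity) hp.ne' hnorm
    omega
  have hxy : max ‖x‖ ‖y‖ = 0 := by simpa [hzw] using hnorm
  rw [max_norm_eq_zero_iff] at hxy hzw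
  exact ⟨hxy.1, hxy.2, hzw.1, hzw.2⟩

end Padic

theorem stmt_1 :
    let B : Matrix (Fin 4) (Fin 4) ℚ_[3] :=
      !![2, 1, -4, -2;
         1, 2, -2, -4;
         -4, -2, -2, -1;
         -2, -4, -1, -2]
    ∀ v : Fin 4 → ℚ_[3], v ⬝ᵥ (B *ᵥ v) = 0 → v = 0 := by
  intro B v h
  have h5 : ¬IsSquare (IsLocalRing.residue ℤ_[3] 5) := fun h5 ↦ by
    have := h5.map PadicInt.residueField
    rw [map_ofNat, map_ofNat] at this
    exact absurd this (by decide)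
  have hdiag : (2 * v 0 + v 1 - 4 * v 2 - 2 * v 3) ^ 2 - ((5 : ℤ_[3]) : ℚ_[3]) * (2 * v 2 + v 3) ^ 2
      + (3 : ℕ) * ((v 1 - 2 * v 3) ^ 2 - ((5 : ℤ_[3]) : ℚ_[3]) * v 3 ^ 2) = 0 := by
    simp only [dotProduct, mulVec, of_apply, cons_val', cons_val_fin_one, Fin.sum_univ_four,
      cons_val_zero, cons_val_one, cons_val, one_mul, neg_mul, B] at h
    rw [show ((5 : ℤ_[3]) : ℚ_[3]) = 5 by norm_cast]
    push_cast
    linear_combination 2 * h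
  obtain ⟨h₁, h₂, h₃, hv3⟩ := Padic.eq_zero_of_sq_sub_mul_sq_add_p_mul_eq_zero h5 hdiag
  have hv2 : v 2 = 0 := by linear_combination (h₂ - hv3) / 2
  have hv1 : v 1 = 0 := by linear_combination h₃ + 2 * hv3
  have hv0 : v 0 = 0 := by linear_combination (h₁ + 4 * hv2 + 2 * hv3 - hv1) / 2
  ext i
  fin_cases i <;> assumption
end

section
/- For all natural numbers q ≠ q', the polynomials P_q(X) = (q² + q + 1)·X² − (2q² + 2q + 3)·X + (q² + q + 1) and P_{q'}(X) = (q'² + q' + 1)·X² − (2q'² + 2q' + 3)·X + (q'² + q' + 1) are coprime elements of ℚ[X]. -/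
/-!
With `a = q² + q + 1` the polynomial is `a (X - 1)² - X`. Two such polynomials differ by
`(a - a') (X - 1)²`, and `a ≠ a'` for `q ≠ q'`, so a common factor divides both `(X - 1)²` and `X`,
which are coprime.
-/

open Polynomial

theorem IsCoprime.mul_sub_mul_sub {R : Type*} [CommRing R] {f g x y : R} (hfg : IsCoprime f g)
    (hxy : IsUnit (x - y)) : IsCoprime (x * f - g) (y * f - g) := by
  have h : IsCoprime ((x - y) * f) (y * f - g) :=
    (isCoprime_mul_unit_left_left hxy _ _).2 (IsCoprime.mul_sub_right_right_iff.2 hfg)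
  simpa [sub_add_sub_cancel, sub_mul] using h.add_mul_left_left 1

theorem isCoprime_X_sub_one_sq_X {R : Type*} [CommRing R] : IsCoprime ((X - 1) ^ 2 : R[X]) X :=
  IsCoprime.pow_left ⟨-1, 1, by ring⟩

theorem C_mul_X_sq_sub_C_mul_X_add_C {R : Type*} [CommRing R] (a b : R) (hb : b = 2 * a + 1) :
    C a * X ^ 2 - C b * X + C a = C a * (X - 1) ^ 2 - X := by
  simp only [hb, map_add, map_mul, map_one, map_ofNat]
  ring

theorem Nat.sq_add_self_add_one_injective : Function.Injective fun n : ℕ => n ^ 2 + n + 1 :=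
  ((strictMono_id.nat_pow two_ne_zero).add strictMono_id |>.add_const 1).injective

theorem stmt_4 (q q' : ℕ) (hqq' : q ≠ q') :
    IsCoprime
      (C ((q : ℚ) ^ 2 + q + 1) * X ^ 2 - C (2 * (q : ℚ) ^ 2 + 2 * q + 3) * X
        + C ((q : ℚ) ^ 2 + q + 1))
      (C ((q' : ℚ) ^ 2 + q' + 1) * X ^ 2 - C (2 * (q' : ℚ) ^ 2 + 2 * q' + 3) * X
        + C ((q' : ℚ) ^ 2 + q' + 1)) := by
  rw [C_mul_X_sq_sub_C_mul_X_add_C _ _ (by ring), C_mul_X_sq_sub_C_mul_X_add_C _ _ (by ring)]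
  have hne : (q : ℚ) ^ 2 + q + 1 ≠ q' ^ 2 + q' + 1 := by
    exact_mod_cast Nat.sq_add_self_add_one_injective.ne hqq'
  refine isCoprime_X_sub_one_sq_X.mul_sub_mul_sub ?_
  rw [← C_sub]
  exact isUnit_C.2 (sub_ne_zero.2 hne).isUnit
end
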